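/- For all nonnegative integers a and b, the quantity Λ₁(a,b) := 2 · ∑_{j=1}^{b} H_{j+a} · (b − 1 + κ_{j−1} + κ_{b−j} − κ_b) is nonpositive: Λ₁(a,b) ≤ 0. -/

import Mathlib

/-!
Put `x = j - 1` and `N = b - 1`. The weights `c_x = b - 1 - κ_b + κ_x + κ_{N-x}` are invariant
under `x ↦ N - x` and sum to zero by the QuickSort recurrence for `κ`. As `κ` is convex, `c_x`
grows with the distance of `x` from `N / 2`, while `H_{x+1+a} + H_{N-x+1+a}` shrinks with it,
`H` being concave. Chebyshev's sum inequality therefore makes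
`∑ (H_{x+1+a} + H_{N-x+1+a}) c_x`, which is twice the sum in question, nonpositive.
-/

open Finset Filter Topology

/-- The `n`-th harmonic number `H_n = ∑_{i=1}^n 1/i`. -/
noncomputable def H (n : ℕ) : ℝ := ∑ i ∈ Finset.range n, (1 : ℝ) / (i + 1)

/-- `κ_n = 2(n+1)H_n - 4n`, the mean number of key comparisons for QuickSort on `n` keys. -/
noncomputable def κ (n : ℕ) : ℝ := 2 * (n + 1) * H n - 4 * n

section Reflect

variable {F : ℕ → ℝ} {N : ℕ}

lemma antitoneOn_add_reflect (hF : Monotone fun k => F (k + 1) - F k) :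
    AntitoneOn (fun x => F x + F (N - x)) (Set.Iic (N / 2)) := by
  refine antitoneOn_of_add_one_le Set.ordConnected_Iic fun x _ _ hx => ?_
  rw [Set.mem_Iic] at hx
  have hxN : x ≤ N - (x + 1) := by omega
  have hsucc : N - x = N - (x + 1) + 1 := by omega
  have := hF hxN
  simp only [hsucc]
  linarith

lemma monotoneOn_add_reflect (hF : Antitone fun k => F (k + 1) - F k) :
    MonotoneOn (fun x => F x + F (N - x)) (Set.Iic (N / 2)) := by
  have hnegF : Monotone fun k => -F (k + 1) - -F k := fun i j hij => by
    have := hF hij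
    simp only
    linarith
  intro x hx y hy hxy
  have := antitoneOn_add_reflect (F := fun k => -F k) hnegF hx hy hxy
  simp only at this ⊢
  linarith

lemma add_reflect_eq_add_reflect_min (P : ℕ → ℝ) {x : ℕ} (hx : x ≤ N) :
    P x + P (N - x) = P (min x (N - x)) + P (N - min x (N - x)) := by
  rcases le_total x (N - x) with h | h
  · rw [min_eq_left h]
  · rw [min_eq_right h, Nat.sub_sub_self hx, add_comm]

lemma antivaryOn_add_reflect {G : ℕ → ℝ} (hF : Monotone fun k => F (k + 1) - F k)
    (hG : Antitone fun k => G (k + 1) - G k) :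
    AntivaryOn (fun x => G x + G (N - x)) (fun x => F x + F (N - x)) (Set.Iic N) := by
  have hfold : ∀ x, min x (N - x) ∈ Set.Iic (N / 2) := fun x => by
    simp only [Set.mem_Iic]; omega
  intro i hi j hj hij
  simp only [add_reflect_eq_add_reflect_min F hi, add_reflect_eq_add_reflect_min F hj] at hij
  simp only [add_reflect_eq_add_reflect_min G hi, add_reflect_eq_add_reflect_min G hj]
  exact (monotoneOn_add_reflect hG).antivaryOn (antitoneOn_add_reflect hF)
    (hfold i) (hfold j) hij

lemma sum_range_mul_add_reflect_nonpos {G : ℕ → ℝ} (hF : Monotone fun k => F (k + 1) - F k)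
    (hG : Antitone fun k => G (k + 1) - G k) {n : ℕ}
    (hsum : ∑ x ∈ range n, (F x + F (n - 1 - x)) = 0) :
    ∑ x ∈ range n, G x * (F x + F (n - 1 - x)) ≤ 0 := by
  rcases Nat.eq_zero_or_pos n with rfl | hn
  · simp
  set c : ℕ → ℝ := fun x => F x + F (n - 1 - x)
  have hreflect : ∑ x ∈ range n, G (n - 1 - x) * c x = ∑ x ∈ range n, G x * c x := by
    rw [← sum_range_reflect]
    refine sum_congr rfl fun x hx => ?_
    have hx : n - 1 - (n - 1 - x) = x := by simp only [mem_range] at hx; omega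
    simp only [c, hx, add_comm (F x)]
  have hanti : AntivaryOn (fun x => G x + G (n - 1 - x)) c (range n : Set ℕ) :=
    (antivaryOn_add_reflect hF hG).subset fun x hx => by
      simp only [coe_range, Set.mem_Iio, Set.mem_Iic] at hx ⊢; omega
  have hcheb := hanti.card_mul_sum_le_sum_mul_sum
  rw [hsum, mul_zero, card_range] at hcheb
  have hsym : ∑ x ∈ range n, (G x + G (n - 1 - x)) * c x = 2 * ∑ x ∈ range n, G x * c x := by
    simp only [add_mul, sum_add_distrib, hreflect]
    ring
  rw [hsym] at hcheb
  linarith [nonpos_of_mul_nonpos_right hcheb (by exact_mod_cast hn)]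

end Reflect

lemma H_succ (n : ℕ) : H (n + 1) = H n + 1 / (n + 1) := by
  simp [H, sum_range_succ]

lemma H_succ_sub (n : ℕ) : H (n + 1) - H n = 1 / (n + 1) := by
  rw [H_succ]; ring

lemma antitone_H_succ_sub : Antitone fun n => H (n + 1) - H n := fun m n hmn => by
  simp only [H_succ_sub]
  gcongr

lemma monotone_H : Monotone H :=
  monotone_nat_of_le_succ fun n => by
    rw [H_succ]
    exact le_add_of_nonneg_right (by positivity)

lemma κ_succ (n : ℕ) : κ (n + 1) = κ n + 2 * H (n + 1) - 2 := by
  have hn : (n : ℝ) + 1 ≠ 0 := by positivity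
  simp only [κ, H_succ]
  push_cast
  field_simp
  ring

lemma monotone_κ_succ_sub : Monotone fun n => κ (n + 1) - κ n := fun m n hmn => by
  simp only [κ_succ]
  linarith [monotone_H (Nat.succ_le_succ hmn)]

lemma two_mul_sum_range_κ (n : ℕ) : 2 * ∑ i ∈ range n, κ i = n * κ n - n * (n - 1) := by
  induction n with
  | zero => simp
  | succ n ih =>
    have hn : (n : ℝ) + 1 ≠ 0 := by positivity
    rw [sum_range_succ, mul_add, ih, κ_succ, κ, H_succ]
    push_cast
    field_simp
    ring

lemma sum_range_κ_add_κ_reflect (n : ℕ) :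
    ∑ x ∈ range n, (κ x + κ (n - 1 - x)) = n * κ n - n * (n - 1) := by
  rw [sum_add_distrib, sum_range_reflect (fun x => κ x), ← two_mul, two_mul_sum_range_κ]

theorem lambda1_nonpos (a b : ℕ) :
    2 * ∑ j ∈ Finset.Icc 1 b,
      H (j + a) * ((b : ℝ) - 1 + κ (j - 1) + κ (b - j) - κ b) ≤ 0 := by
  set F : ℕ → ℝ := fun k => κ k + ((b : ℝ) - 1 - κ b) / 2
  have hF : Monotone fun k => F (k + 1) - F k := by
    simpa only [F, add_sub_add_right_eq_sub] using monotone_κ_succ_sub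
  have hG : Antitone fun k => H (k + 1 + 1 + a) - H (k + 1 + a) := fun m n hmn => by
    simpa only [Nat.add_right_comm _ 1 a] using
      antitone_H_succ_sub (show m + a + 1 ≤ n + a + 1 by omega)
  have hsum : ∑ x ∈ range b, (F x + F (b - 1 - x)) = 0 := by
    have := sum_range_κ_add_κ_reflect b
    simp only [F, sum_add_distrib, sum_const, card_range, nsmul_eq_mul] at this ⊢
    linarith
  have hreindex : ∑ j ∈ Icc 1 b, H (j + a) * ((b : ℝ) - 1 + κ (j - 1) + κ (b - j) - κ b)
      = ∑ x ∈ range b, H (x + 1 + a) * (F x + F (b - 1 - x)) := by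
    rw [← Ico_add_one_right_eq_Icc, sum_Ico_eq_sum_range, Nat.add_sub_cancel]
    refine sum_congr rfl fun x _ => ?_
    simp only [F, add_comm 1 x, Nat.add_sub_cancel, Nat.sub_sub]
    ring
  rw [hreindex]
  linarith [sum_range_mul_add_reflect_nonpos (G := fun k => H (k + 1 + a)) hF hG hsum]
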